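/- arXiv:2506.09401 — 4 statements merged into one kernel-verified Lean document; each statement's English description precedes it below -/
import Mathlib

section
/- Let S be a Polish space and let Z ⊆ P(P(S)) be a tight family of probability measures on P(S). Then the set of barycenters {bar(X) : X ∈ Z} ⊆ P(S), where bar(X)(B) = ∫ ν(B) X(dν) for Borel B ⊆ S, is tight in P(S). -/
open MeasureTheory Topology Filter
open scoped ENNReal NNReal

/-- A family `A` of Borel probability measures on a topological space is *tight* if for every
`ε > 0` there is a compact set `K` such that `μ K > 1 - ε` for every `μ ∈ A`. -/
def IsTightFamily {α : Type*} [TopologicalSpace α] [MeasurableSpace α]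
    (A : Set (ProbabilityMeasure α)) : Prop :=
  ∀ ε : ℝ≥0∞, 0 < ε → ∃ K : Set α, IsCompact K ∧ ∀ μ ∈ A, 1 - ε < (μ : Measure α) K

/-!
Given `ε`, tightness of `Z` yields a compact `A ⊆ P(S)` carrying all but `ε / 2` of the mass of
every `X ∈ Z`, and by Prokhorov's theorem the compact family `A` is itself tight: some compact
`K ⊆ S` has `ν Kᶜ ≤ ε / 2` for all `ν ∈ A`. Splitting `bar(X) Kᶜ = ∫ ν Kᶜ dX(ν)` over `A` and
`Aᶜ` then bounds it by `ε / 2 + X Aᶜ ≤ ε`.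
-/

open Set

lemma isTightFamily_iff_isTightMeasureSet {α : Type*} [TopologicalSpace α] [T2Space α]
    [MeasurableSpace α] [OpensMeasurableSpace α] {A : Set (ProbabilityMeasure α)} :
    IsTightFamily A ↔ IsTightMeasureSet {(μ : Measure α) | μ ∈ A} := by
  simp only [IsTightFamily, isTightMeasureSet_iff_exists_isCompact_measure_compl_le,
    mem_ofPred_eq, forall_exists_index, and_imp, forall_apply_eq_imp_iff₂]
  refine ⟨fun h ε hε ↦ ?_, fun h ε hε ↦ ?_⟩
  · obtain ⟨K, hK, hKA⟩ := h ε hε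
    refine ⟨K, hK, fun μ hμ ↦ ?_⟩
    rw [prob_compl_eq_one_sub hK.measurableSet, tsub_le_iff_right, add_comm, ← tsub_le_iff_right]
    exact (hKA μ hμ).le
  · -- `μ Kᶜ ≤ ε` only gives `1 - ε ≤ μ K`, so we ask for a bound `δ < ε`, also below `1`
    obtain ⟨δ, hδ, hδε⟩ := exists_between (lt_min hε one_pos)
    obtain ⟨K, hK, hKA⟩ := h δ hδ
    refine ⟨K, hK, fun μ hμ ↦ ?_⟩
    calc 1 - ε ≤ 1 - min ε 1 := tsub_le_tsub_left (min_le_left _ _) _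
      _ < 1 - δ := ((ENNReal.cancel_of_ne ENNReal.one_ne_top).tsub_lt_tsub_iff_left_of_le
          (ENNReal.cancel_of_ne ((min_le_right ε 1).trans_lt ENNReal.one_lt_top).ne)
          (min_le_right _ _)).2 hδε
      _ ≤ (μ : Measure α) K := by
        rw [tsub_le_iff_right, add_comm, ← tsub_le_iff_right,
          ← prob_compl_eq_one_sub hK.measurableSet]
        exact hKA μ hμ

lemma isTightMeasureSet_of_isCompact {S : Type*} [TopologicalSpace S] [PolishSpace S]
    [MeasurableSpace S] [BorelSpace S] {A : Set (ProbabilityMeasure S)} (hA : IsCompact A) :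
    IsTightMeasureSet {(μ : Measure S) | μ ∈ A} := by
  let := TopologicalSpace.upgradeIsCompletelyMetrizable S
  exact isTightMeasureSet_of_isCompact_closure hA.closure

lemma lintegral_le_add_measure_compl {β : Type*} [MeasurableSpace β] {μ : Measure β}
    [IsZeroOrProbabilityMeasure μ] {f : β → ℝ≥0∞} {A : Set β} (hA : MeasurableSet A)
    {δ : ℝ≥0∞} (hf : ∀ x, f x ≤ 1) (hfA : ∀ x ∈ A, f x ≤ δ) :
    ∫⁻ x, f x ∂μ ≤ δ + μ Aᶜ :=
  calc ∫⁻ x, f x ∂μ = ∫⁻ x in A, f x ∂μ + ∫⁻ x in Aᶜ, f x ∂μ := (lintegral_add_compl f hA).symm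
    _ ≤ ∫⁻ _ in A, δ ∂μ + ∫⁻ _ in Aᶜ, 1 ∂μ :=
      add_le_add (setLIntegral_mono' hA hfA) (setLIntegral_mono' hA.compl fun x _ ↦ hf x)
    _ = δ * μ A + μ Aᶜ := by rw [setLIntegral_const, setLIntegral_one]
    _ ≤ δ + μ Aᶜ := by gcongr; exact mul_le_of_le_one_right' prob_le_one

/-- If `Z ⊆ P(P(S))` is tight, then the set of barycenters of members of `Z` is tight
in `P(S)`, where `m ∈ P(S)` is a barycenter of `X ∈ P(P(S))` if
`m B = ∫ ν B dX(ν)` for all Borel `B ⊆ S`. -/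
theorem tight_barycenters_of_tight
    {S : Type*} [MeasurableSpace S] [TopologicalSpace S] [PolishSpace S] [BorelSpace S]
    [MeasurableSpace (ProbabilityMeasure S)] [BorelSpace (ProbabilityMeasure S)]
    (Z : Set (ProbabilityMeasure (ProbabilityMeasure S)))
    (hZ : IsTightFamily Z) :
    IsTightFamily {m : ProbabilityMeasure S | ∃ X ∈ Z, ∀ B : Set S, MeasurableSet B →
      (m : Measure S) B
        = ∫⁻ ν, (ν : Measure S) B ∂(X : Measure (ProbabilityMeasure S))} := by
  rw [isTightFamily_iff_isTightMeasureSet,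
    isTightMeasureSet_iff_exists_isCompact_measure_compl_le] at hZ ⊢
  intro ε hε
  have hε2 : 0 < ε / 2 := ENNReal.half_pos hε.ne'
  obtain ⟨A, hA, hZA⟩ := hZ (ε / 2) hε2
  obtain ⟨K, hK, hAK⟩ := isTightMeasureSet_iff_exists_isCompact_measure_compl_le.1
    (isTightMeasureSet_of_isCompact hA) (ε / 2) hε2
  refine ⟨K, hK, ?_⟩
  rintro _ ⟨m, ⟨X, hX, hbar⟩, rfl⟩
  calc (m : Measure S) Kᶜ = ∫⁻ ν, (ν : Measure S) Kᶜ ∂(X : Measure (ProbabilityMeasure S)) :=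
        hbar _ hK.measurableSet.compl
    _ ≤ ε / 2 + (X : Measure (ProbabilityMeasure S)) Aᶜ :=
        lintegral_le_add_measure_compl hA.measurableSet (fun _ ↦ prob_le_one)
          fun ν hν ↦ hAK _ ⟨ν, hν, rfl⟩
    _ ≤ ε / 2 + ε / 2 := by gcongr; exact hZA _ ⟨X, hX, rfl⟩
    _ = ε := ENNReal.add_halves ε
end

section
/- Let E be a Polish space and let κ : E → P(E) be a continuous (Feller) Markov transition kernel. Let (X_n)_{n≥0} be an E-valued Markov chain with kernel κ on a probability space with filtration (F_n), i.e., X_n is F_n-measurable and E[f(X_{n+1}) | F_n] = ∫ f(y) κ(dy|X_n) almost surely for every bounded continuous f : E → ℝ. If X_n converges almost surely to a random variable X_∞, then almost surely κ(·|X_∞) = δ_{X_∞}, i.e., X_∞ takes values in the set of absorbing states of the chain. -/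
/-!
Fix a bounded continuous test function `f` and write `Pf x = ∫ f dκ(x)`, continuous because `κ`
is Feller. The increments `Dₙ = f(Xₙ₊₁) - Pf(Xₙ)` are martingale differences, so consecutive
ones are orthogonal: `E[Dₙ Dₙ₊₁] = 0`. Along the convergent path, `Dₙ Dₙ₊₁ → (f(X∞) - Pf(X∞))²`
boundedly, hence `Pf(X∞) = f(X∞)` almost surely. Each set `{x | Pf x = f x}` is closed, and in a
second countable space countably many of them already cut out their intersection, which is the
set of absorbing states.
-/

open MeasureTheory Topology Filter BoundedContinuousFunction

section Orthogonality

variable {Ω : Type*} {m m0 : MeasurableSpace Ω} {μ : Measure Ω} [IsFiniteMeasure μ]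

lemma integral_mul_eq_zero_of_condExp_eq_zero (hm : m ≤ m0) {φ g : Ω → ℝ}
    (hφ : StronglyMeasurable[m] φ) {C : ℝ} (hφC : ∀ ω, ‖φ ω‖ ≤ C) (hg : Integrable g μ)
    (hg0 : μ[g | m] =ᵐ[μ] 0) :
    ∫ ω, φ ω * g ω ∂μ = 0 :=
  calc ∫ ω, φ ω * g ω ∂μ = ∫ ω, μ[φ * g | m] ω ∂μ := (integral_condExp hm).symm
    _ = ∫ ω, (φ * μ[g | m]) ω ∂μ :=
        integral_congr_ae (condExp_stronglyMeasurable_mul_of_bound hm hφ hg C (ae_of_all _ hφC))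
    _ = 0 := integral_eq_zero_of_ae (by filter_upwards [hg0] with ω h; simp [h])

lemma ae_eq_zero_of_tendsto_of_integral_mul_succ_eq_zero {Z : ℕ → Ω → ℝ} {Zlim : Ω → ℝ} {C : ℝ}
    (hZm : ∀ n, AEStronglyMeasurable (Z n) μ) (hZC : ∀ n ω, ‖Z n ω‖ ≤ C)
    (hlim : ∀ᵐ ω ∂μ, Tendsto (Z · ω) atTop (𝓝 (Zlim ω)))
    (horth : ∀ n, ∫ ω, Z n ω * Z (n + 1) ω ∂μ = 0) :
    Zlim =ᵐ[μ] 0 := by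
  have hprod : ∀ᵐ ω ∂μ, Tendsto (fun n => Z n ω * Z (n + 1) ω) atTop (𝓝 (Zlim ω ^ 2)) := by
    filter_upwards [hlim] with ω h
    simpa [sq] using h.mul (h.comp (tendsto_add_atTop_nat 1))
  have hprodC : ∀ n ω, ‖Z n ω * Z (n + 1) ω‖ ≤ C ^ 2 := fun n ω => by
    rw [norm_mul, sq]
    exact mul_le_mul (hZC _ _) (hZC _ _) (norm_nonneg _) ((norm_nonneg (Z n ω)).trans (hZC n ω))
  have hsq : ∫ ω, Zlim ω ^ 2 ∂μ = 0 := by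
    refine tendsto_nhds_unique (tendsto_integral_of_dominated_convergence (fun _ => C ^ 2)
      (fun n => (hZm n).mul (hZm (n + 1))) (integrable_const _)
      (fun n => ae_of_all _ (hprodC n)) hprod) ?_
    simpa only [Pi.mul_apply, horth] using tendsto_const_nhds
  have hsq_int : Integrable (fun ω => Zlim ω ^ 2) μ := by
    refine (integrable_const (C ^ 2)).mono'
      ((aestronglyMeasurable_of_tendsto_ae _ hZm hlim).pow 2) ?_
    filter_upwards [hprod] with ω h
    exact le_of_tendsto' h.norm fun n => hprodC n ω
  filter_upwards [(integral_eq_zero_iff_of_nonneg (fun ω => sq_nonneg _) hsq_int).mp hsq]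
    with ω h
  exact pow_eq_zero_iff two_ne_zero |>.mp h

end Orthogonality

lemma ae_forall_mem_of_isClosed {Ω α ι : Type*} {m0 : MeasurableSpace Ω} {μ : Measure Ω}
    [TopologicalSpace α] [SecondCountableTopology α] {s : ι → Set α} (hs : ∀ i, IsClosed (s i))
    {Y : Ω → α} (hY : ∀ i, ∀ᵐ ω ∂μ, Y ω ∈ s i) :
    ∀ᵐ ω ∂μ, ∀ i, Y ω ∈ s i := by
  obtain ⟨T, hT, hTs⟩ := TopologicalSpace.isOpen_iUnion_countable (fun i => (s i)ᶜ)
    fun i => (hs i).isOpen_compl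
  filter_upwards [(ae_ball_iff hT).mpr fun i _ => hY i] with ω hω i
  by_contra hi
  have hYT : Y ω ∈ ⋃ i ∈ T, (s i)ᶜ := hTs ▸ Set.mem_iUnion.mpr ⟨i, hi⟩
  obtain ⟨j, hj, hYj⟩ := Set.mem_iUnion₂.mp hYT
  exact hYj (hω j hj)

lemma eq_dirac_of_forall_integral_eq {E : Type*} [MeasurableSpace E] [TopologicalSpace E]
    [HasOuterApproxClosed E] [BorelSpace E] {μ : Measure E} [IsProbabilityMeasure μ] {x : E}
    (h : ∀ f : E →ᵇ ℝ, ∫ y, f y ∂μ = f x) :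
    μ = Measure.dirac x :=
  ext_of_forall_integral_eq_of_IsFiniteMeasure fun f => by
    rw [h f, integral_dirac' _ _ f.continuous.stronglyMeasurable]

section MarkovChain

variable {E : Type*} [MeasurableSpace E] [TopologicalSpace E] [OpensMeasurableSpace E]
  (κ : E → ProbabilityMeasure E) (hκ : Continuous κ)

noncomputable def transitionOperator (f : E →ᵇ ℝ) : E →ᵇ ℝ :=
  ofNormedAddCommGroup (fun x => ∫ y, f y ∂(κ x : Measure E))
    ((ProbabilityMeasure.continuous_integral_boundedContinuousFunction f).comp hκ) ‖f‖
    fun _ => f.norm_integral_le_norm _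

variable {Ω : Type*} {m0 : MeasurableSpace Ω}

def IsMarkovChain (P : Measure Ω) (ℱ : Filtration ℕ m0) (X : ℕ → Ω → E) : Prop :=
  ∀ (f : E →ᵇ ℝ) (n : ℕ),
    P[(fun ω => f (X (n + 1) ω)) | ℱ n] =ᵐ[P] fun ω => ∫ y, f y ∂(κ (X n ω) : Measure E)

noncomputable def markovIncrement (f : E →ᵇ ℝ) (X : ℕ → Ω → E) (n : ℕ) (ω : Ω) : ℝ :=
  f (X (n + 1) ω) - transitionOperator κ hκ f (X n ω)

variable {P : Measure Ω} [IsFiniteMeasure P] {ℱ : Filtration ℕ m0} {X : ℕ → Ω → E}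

lemma norm_markovIncrement_le (f : E →ᵇ ℝ) (n : ℕ) (ω : Ω) :
    ‖markovIncrement κ hκ f X n ω‖ ≤ ‖f‖ + ‖transitionOperator κ hκ f‖ :=
  (norm_sub_le _ _).trans (add_le_add (f.norm_coe_le_norm _) (norm_coe_le_norm _ _))

lemma stronglyMeasurable_markovIncrement (hadp : ∀ n, Measurable[ℱ n] (X n)) (f : E →ᵇ ℝ)
    (n : ℕ) : StronglyMeasurable[ℱ (n + 1)] (markovIncrement κ hκ f X n) :=
  ((f.continuous.measurable.comp (hadp (n + 1))).sub
    ((map_continuous _).measurable.comp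
      ((hadp n).mono (ℱ.mono n.le_succ) le_rfl))).stronglyMeasurable

lemma condExp_markovIncrement (hadp : ∀ n, Measurable[ℱ n] (X n))
    (hMarkov : IsMarkovChain κ P ℱ X) (f : E →ᵇ ℝ) (n : ℕ) :
    P[markovIncrement κ hκ f X n | ℱ n] =ᵐ[P] 0 := by
  set Pf := transitionOperator κ hκ f
  have hf : Integrable (fun ω => f (X (n + 1) ω)) P :=
    (f.integrable _).comp_measurable ((hadp (n + 1)).mono (ℱ.le _) le_rfl)
  have hPf_meas : StronglyMeasurable[ℱ n] fun ω => Pf (X n ω) :=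
    (Pf.continuous.measurable.comp (hadp n)).stronglyMeasurable
  have hPf : Integrable (fun ω => Pf (X n ω)) P :=
    (Pf.integrable _).comp_measurable ((hadp n).mono (ℱ.le _) le_rfl)
  have hD : markovIncrement κ hκ f X n = (fun ω => f (X (n + 1) ω)) - fun ω => Pf (X n ω) := rfl
  filter_upwards [condExp_sub hf hPf (ℱ n), hMarkov f n] with ω hsub hcond
  rw [hD, hsub, Pi.sub_apply, hcond, condExp_of_stronglyMeasurable (ℱ.le n) hPf_meas hPf]
  exact sub_self _

lemma integral_markovIncrement_mul_succ (hadp : ∀ n, Measurable[ℱ n] (X n))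
    (hMarkov : IsMarkovChain κ P ℱ X) (f : E →ᵇ ℝ) (n : ℕ) :
    ∫ ω, markovIncrement κ hκ f X n ω * markovIncrement κ hκ f X (n + 1) ω ∂P = 0 :=
  integral_mul_eq_zero_of_condExp_eq_zero (ℱ.le (n + 1))
    (stronglyMeasurable_markovIncrement κ hκ hadp f n) (norm_markovIncrement_le κ hκ f n)
    (Integrable.of_bound ((stronglyMeasurable_markovIncrement κ hκ hadp f (n + 1)).mono
      (ℱ.le _)).aestronglyMeasurable _ (ae_of_all _ (norm_markovIncrement_le κ hκ f (n + 1))))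
    (condExp_markovIncrement κ hκ hadp hMarkov f (n + 1))

lemma ae_transitionOperator_apply_limit_eq (hadp : ∀ n, Measurable[ℱ n] (X n))
    (hMarkov : IsMarkovChain κ P ℱ X)
    {Xlim : Ω → E} (hconv : ∀ᵐ ω ∂P, Tendsto (fun n => X n ω) atTop (𝓝 (Xlim ω)))
    (f : E →ᵇ ℝ) :
    ∀ᵐ ω ∂P, transitionOperator κ hκ f (Xlim ω) = f (Xlim ω) := by
  have hlim : ∀ᵐ ω ∂P, Tendsto (markovIncrement κ hκ f X · ω) atTop
      (𝓝 (f (Xlim ω) - transitionOperator κ hκ f (Xlim ω))) := by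
    filter_upwards [hconv] with ω h
    exact ((f.continuous.tendsto _).comp (h.comp (tendsto_add_atTop_nat 1))).sub
      (((map_continuous _).tendsto _).comp h)
  filter_upwards [ae_eq_zero_of_tendsto_of_integral_mul_succ_eq_zero
    (fun n => ((stronglyMeasurable_markovIncrement κ hκ hadp f n).mono
      (ℱ.le _)).aestronglyMeasurable)
    (norm_markovIncrement_le κ hκ f) hlim
    (integral_markovIncrement_mul_succ κ hκ hadp hMarkov f)] with ω hω
  exact (sub_eq_zero.mp hω).symm

end MarkovChain

/-- Let `κ` be a Feller (continuous) Markov transition kernel on a Polish space `E` and let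
`(X n)` be a Markov chain with kernel `κ`.  If `X n` converges almost surely to `X∞`, then
almost surely `κ(·|X∞) = δ_{X∞}`, i.e. `X∞` takes values in the set of absorbing states. -/
theorem limit_is_absorbing_of_feller
    {E : Type*} [MeasurableSpace E] [TopologicalSpace E] [PolishSpace E] [BorelSpace E]
    (κ : E → ProbabilityMeasure E) (hκ : Continuous κ)
    {Ω : Type*} {m0 : MeasurableSpace Ω} (P : Measure Ω) [IsProbabilityMeasure P]
    (ℱ : Filtration ℕ m0)
    (X : ℕ → Ω → E)
    (hadp : ∀ n, Measurable[ℱ n] (X n))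
    (hMarkov : ∀ (f : E →ᵇ ℝ) (n : ℕ),
      P[(fun ω => f (X (n + 1) ω)) | ℱ n]
        =ᵐ[P] fun ω => ∫ y, f y ∂(κ (X n ω) : Measure E))
    (Xlim : Ω → E)
    (hconv : ∀ᵐ ω ∂P, Tendsto (fun n => X n ω) atTop (𝓝 (Xlim ω))) :
    ∀ᵐ ω ∂P, (κ (Xlim ω) : Measure E) = Measure.dirac (Xlim ω) := by
  have hclosed (f : E →ᵇ ℝ) : IsClosed {x | transitionOperator κ hκ f x = f x} :=
    isClosed_eq (map_continuous _) (map_continuous f)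
  filter_upwards [ae_forall_mem_of_isClosed hclosed
    (ae_transitionOperator_apply_limit_eq κ hκ hadp hMarkov hconv)] with ω hω
  exact eq_dirac_of_forall_integral_eq hω
end

section
/- Let S be a Polish space and N ≥ 1. Let κ_N : P(S) → P(P(S)) be the bootstrap (empirical-measure) kernel: κ_N(μ) is the law of the empirical measure (1/N)∑_{i=1}^N δ_{X_i} of N i.i.d. samples X_1,…,X_N with common law μ, i.e., the pushforward of the product measure μ^{⊗N} on S^N under the map (x_1,…,x_N) ↦ (1/N)∑_{i=1}^N δ_{x_i}. Let (μ_n)_{n≥0} be a P(S)-valued Markov chain with kernel κ_N (with arbitrary initial distribution), on a probability space with filtration (F_n): μ_n is F_n-measurable and E[g(μ_{n+1}) | F_n] = ∫ g(ν) κ_N(μ_n)(dν) almost surely for all bounded measurable g : P(S) → ℝ. Then there exists an S-valued random variable γ such that μ_n → δ_γ almost surely in the topology of weak convergence on P(S). -/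
open MeasureTheory Topology Filter BoundedContinuousFunction
open scoped ENNReal NNReal

/-- The empirical measure `(1/N) ∑ᵢ δ_{x i}` of a tuple `x : Fin N → S`, as a probability
measure (for `N ≥ 1`). -/
noncomputable def empiricalMeasure {S : Type*} [MeasurableSpace S] {N : ℕ} (hN : 0 < N)
    (x : Fin N → S) : ProbabilityMeasure S :=
  ⟨(N : ℝ≥0∞)⁻¹ • ∑ i, Measure.dirac (x i), by
    constructor
    have h : (∑ i : Fin N, Measure.dirac (x i)) Set.univ = N := by
      rw [Measure.finset_sum_apply]
      simp
    rw [Measure.smul_apply, h, smul_eq_mul]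
    exact ENNReal.inv_mul_cancel (by exact_mod_cast hN.ne') (by simp)⟩

theorem integral_empiricalMeasure {S : Type*} [MeasurableSpace S] [TopologicalSpace S]
    [OpensMeasurableSpace S] {N : ℕ} (hN : 0 < N) (y : Fin N → S) (f : S →ᵇ ℝ) :
    ∫ a, f a ∂(empiricalMeasure hN y : Measure S) = (N : ℝ)⁻¹ * ∑ i, f (y i) := by
  change ∫ a, f a ∂((N : ℝ≥0∞)⁻¹ • ∑ i, Measure.dirac (y i)) = _
  rw [integral_smul_measure, integral_finset_sum_measure]
  · simp only [ENNReal.toReal_inv, ENNReal.toReal_natCast, smul_eq_mul]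
    congr 1
    refine Finset.sum_congr rfl fun i _ => ?_
    exact integral_dirac' _ _ f.continuous.stronglyMeasurable
  · intro i _
    exact f.integrable _

/-- The map `x ↦ (1/N) ∑ᵢ δ_{x i}` is continuous into `P(S)` with the topology of weak
convergence. -/
theorem continuous_empiricalMeasure {S : Type*} [MeasurableSpace S] [TopologicalSpace S]
    [OpensMeasurableSpace S] {N : ℕ} (hN : 0 < N) :
    Continuous (empiricalMeasure (S := S) hN) := by
  rw [continuous_iff_continuousAt]
  intro x
  unfold ContinuousAt
  rw [MeasureTheory.ProbabilityMeasure.tendsto_iff_forall_integral_tendsto]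
  intro f
  simp only [fun y : Fin N → S => integral_empiricalMeasure hN y f]
  apply Filter.Tendsto.const_mul
  apply tendsto_finset_sum
  intro i _
  exact (f.continuous.comp (continuous_apply i)).continuousAt

/-- The bootstrap (empirical-measure) kernel `κ_N : P(S) → P(P(S))`: `bootstrapKernel hN μ`
is the law of the empirical measure of `N` i.i.d. samples from `μ`, i.e. the pushforward of
the product measure `μ^{⊗N}` on `S^N` under the map `x ↦ (1/N) ∑ᵢ δ_{x i}`. -/
noncomputable def bootstrapKernel {S : Type*} [MeasurableSpace S] [TopologicalSpace S]
    [PolishSpace S] [BorelSpace S]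
    [MeasurableSpace (ProbabilityMeasure S)] [BorelSpace (ProbabilityMeasure S)]
    {N : ℕ} (hN : 0 < N) (μ : ProbabilityMeasure S) :
    ProbabilityMeasure (ProbabilityMeasure S) :=
  ⟨(Measure.pi fun _ : Fin N => (μ : Measure S)).map (empiricalMeasure hN),
    MeasureTheory.Measure.isProbabilityMeasure_map
      (continuous_empiricalMeasure hN).measurable.aemeasurable⟩

/-!
Every state of the chain after time `0` is an empirical measure `ρ` of `N` points, and
resampling from `ρ` draws `N` copies of one of its atoms with probability at least
`ρ {x₁} ^ N ≥ N⁻¹ ^ N`, which yields a Dirac mass. So the probability of not being a Dirac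
mass decays geometrically, and by Borel–Cantelli the chain almost surely ends up among the
Dirac masses. These are fixed points of the kernel (`κ_N δ_x = δ_{δ_x}`), so from then on the
chain is almost surely constant.
-/

open ProbabilityTheory Set

theorem MeasureTheory.ae_eventually_notMem_of_measure_succ_le {α : Type*}
    {m : MeasurableSpace α} {μ : Measure α} [IsFiniteMeasure μ] {s : ℕ → Set α} {q : ℝ≥0∞}
    (hq : q < 1)
    (h : ∀ n, μ (s (n + 1)) ≤ q * μ (s n)) :
    ∀ᵐ x ∂μ, ∀ᶠ n in atTop, x ∉ s n := by
  have h_geom : ∀ n, μ (s n) ≤ μ (s 0) * q ^ n := by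
    intro n
    induction n with
    | zero => simp
    | succ n ih =>
      calc μ (s (n + 1)) ≤ q * μ (s n) := h n
        _ ≤ q * (μ (s 0) * q ^ n) := by gcongr
        _ = μ (s 0) * q ^ (n + 1) := by ring
  refine ae_eventually_notMem (ne_top_of_le_ne_top ?_ (ENNReal.tsum_le_tsum h_geom))
  rw [ENNReal.tsum_mul_left, ENNReal.tsum_geometric]
  exact ENNReal.mul_ne_top (measure_ne_top _ _) (ENNReal.inv_ne_top.2 (tsub_pos_of_lt hq).ne')

section MarkovChain

variable {E Ω : Type*} [MeasurableSpace E] {m0 : MeasurableSpace Ω}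

structure IsMarkovChain_s8 (P : Measure Ω) (ℱ : Filtration ℕ m0) (X : ℕ → Ω → E)
    (κ : Kernel E E) : Prop where
  measurable : ∀ n, Measurable[ℱ n] (X n)
  condExp_comp_succ : ∀ (n : ℕ) (g : E → ℝ), Measurable g → (∃ C : ℝ, ∀ x, |g x| ≤ C) →
    P[(fun ω => g (X (n + 1) ω)) | ℱ n] =ᵐ[P] fun ω => ∫ x, g x ∂κ (X n ω)

namespace IsMarkovChain_s8

variable {P : Measure Ω} [IsFiniteMeasure P] {ℱ : Filtration ℕ m0} {X : ℕ → Ω → E}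
  {κ : Kernel E E} [IsMarkovKernel κ]

theorem measure_inter_preimage_succ (hX : IsMarkovChain_s8 P ℱ X κ) {n : ℕ} {A : Set Ω}
    (hA : MeasurableSet[ℱ n] A) {B : Set E} (hB : MeasurableSet B) :
    P (A ∩ X (n + 1) ⁻¹' B) = ∫⁻ ω in A, κ (X n ω) B ∂P := by
  have hXn : Measurable (X n) := (hX.measurable n).mono (ℱ.le n) le_rfl
  have hXsucc : Measurable (X (n + 1)) := (hX.measurable (n + 1)).mono (ℱ.le _) le_rfl
  have h_ind :
      (fun ω => B.indicator (1 : E → ℝ) (X (n + 1) ω)) = (X (n + 1) ⁻¹' B).indicator 1 :=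
    funext fun ω => (indicator_comp_right (X (n + 1))).symm
  have h_kernel : Integrable (fun ω => (κ (X n ω)).real B) P :=
    .of_bound ((κ.measurable_coe hB).comp hXn).ennreal_toReal.aestronglyMeasurable 1
      (ae_of_all _ fun ω => by
        rw [Real.norm_eq_abs, abs_of_nonneg measureReal_nonneg]
        exact measureReal_le_one)
  have h_int : Integrable (fun ω => B.indicator (1 : E → ℝ) (X (n + 1) ω)) P := by
    rw [h_ind]
    exact (integrable_const 1).indicator (hXsucc hB)
  have h_cond := hX.condExp_comp_succ n _ (measurable_one.indicator hB)
    ⟨1, fun x => by by_cases hx : x ∈ B <;> simp [hx]⟩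
  have h_real : P.real (A ∩ X (n + 1) ⁻¹' B) = ∫ ω in A, (κ (X n ω)).real B ∂P :=
    calc P.real (A ∩ X (n + 1) ⁻¹' B)
        = ∫ ω in A, B.indicator 1 (X (n + 1) ω) ∂P := by
          rw [h_ind, integral_indicator_one (hXsucc hB), measureReal_restrict_apply (hXsucc hB),
            inter_comm]
      _ = ∫ ω in A, P[fun ω => B.indicator 1 (X (n + 1) ω) | ℱ n] ω ∂P :=
          (setIntegral_condExp (ℱ.le n) h_int hA).symm
      _ = ∫ ω in A, ∫ x, B.indicator 1 x ∂κ (X n ω) ∂P :=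
          setIntegral_congr_ae (ℱ.le n _ hA) (h_cond.mono fun ω hω _ => hω)
      _ = ∫ ω in A, (κ (X n ω)).real B ∂P := by simp only [integral_indicator_one hB]
  rw [← ofReal_measureReal, h_real, ofReal_integral_eq_lintegral_ofReal h_kernel.integrableOn
    (ae_of_all _ fun _ => measureReal_nonneg)]
  exact lintegral_congr fun ω => ofReal_measureReal

theorem ae_imp_notMem_succ (hX : IsMarkovChain_s8 P ℱ X κ) {n : ℕ} {A B : Set E}
    (hA : MeasurableSet A) (hB : MeasurableSet B) (hAB : ∀ x ∈ A, κ x B = 0) :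
    ∀ᵐ ω ∂P, X n ω ∈ A → X (n + 1) ω ∉ B := by
  have hA' : MeasurableSet[ℱ n] (X n ⁻¹' A) := hX.measurable n hA
  have h_null : P (X n ⁻¹' A ∩ X (n + 1) ⁻¹' B) = 0 := by
    rw [hX.measure_inter_preimage_succ hA' hB, setLIntegral_congr_fun (ℱ.le n _ hA')
      fun ω hω => hAB _ hω, lintegral_zero]
  rw [ae_iff]
  simp only [Classical.not_imp, not_not]
  exact h_null

theorem ae_eventually_mem (hX : IsMarkovChain_s8 P ℱ X κ) {D : Set E} (hD : MeasurableSet D)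
    {q : ℝ≥0∞} (hq : q < 1) (h_absorb : ∀ x ∈ D, κ x Dᶜ = 0)
    (h_escape : ∀ x, ∀ᵐ y ∂κ x, κ y Dᶜ ≤ q) :
    ∀ᵐ ω ∂P, ∀ᶠ n in atTop, X n ω ∈ D := by
  have h_escape_succ : ∀ n, ∀ᵐ ω ∂P, κ (X (n + 1) ω) Dᶜ ≤ q := fun n => by
    filter_upwards [hX.ae_imp_notMem_succ (n := n) MeasurableSet.univ
      (measurableSet_lt measurable_const (κ.measurable_coe hD.compl))
      fun x _ => by simpa only [ae_iff, not_le] using h_escape x] with ω hω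
    simpa using hω trivial
  have h_contract : ∀ n, P (X (n + 1 + 1) ⁻¹' Dᶜ) ≤ q * P (X (n + 1) ⁻¹' Dᶜ) := fun n =>
    calc P (X (n + 1 + 1) ⁻¹' Dᶜ) = ∫⁻ ω, κ (X (n + 1) ω) Dᶜ ∂P := by
          simpa using hX.measure_inter_preimage_succ MeasurableSet.univ hD.compl
      _ ≤ ∫⁻ ω, q * (X (n + 1) ⁻¹' Dᶜ).indicator 1 ω ∂P := by
          refine lintegral_mono_ae ?_
          filter_upwards [h_escape_succ n] with ω hω
          by_cases hωD : X (n + 1) ω ∈ D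
          · simp [h_absorb _ hωD, hωD]
          · simpa [hωD] using hω
      _ = q * P (X (n + 1) ⁻¹' Dᶜ) := by
          rw [lintegral_const_mul _ (measurable_one.indicator _), lintegral_indicator_one]
          all_goals exact (hX.measurable (n + 1)).mono (ℱ.le _) le_rfl hD.compl
  filter_upwards [ae_eventually_notMem_of_measure_succ_le hq h_contract] with ω hω
  rw [← map_add_atTop_eq_nat 1]
  simpa using hω

theorem ae_imp_eq_succ (hX : IsMarkovChain_s8 P ℱ X κ) {A : Set E} (hA : MeasurableSet A)
    [HasCountableSeparatingOn E MeasurableSet A] (h_fix : ∀ x ∈ A, κ x = Measure.dirac x)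
    (n : ℕ) : ∀ᵐ ω ∂P, X n ω ∈ A → X (n + 1) ω = X n ω := by
  have h_keep : ∀ B, MeasurableSet B → ∀ᵐ ω ∂P, X n ω ∈ A ∩ B → X (n + 1) ω ∈ B :=
    fun B hB => by
      filter_upwards [hX.ae_imp_notMem_succ (hA.inter hB) hB.compl fun x hx => by
        rw [h_fix x hx.1, Measure.dirac_apply' _ hB.compl]
        simp [hx.2]] with ω hω
      simpa using hω
  obtain ⟨T, hT_count, hT_meas, hT_sep⟩ := exists_countable_separating E MeasurableSet A
  have h_keep_all : ∀ᵐ ω ∂P, ∀ B ∈ T,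
      (X n ω ∈ A ∩ B → X (n + 1) ω ∈ B) ∧ (X n ω ∈ A ∩ Bᶜ → X (n + 1) ω ∈ Bᶜ) :=
    (ae_ball_iff hT_count).2 fun B hB =>
      (h_keep B (hT_meas B hB)).and (h_keep Bᶜ (hT_meas B hB).compl)
  filter_upwards [h_keep A hA, h_keep_all] with ω h_stay h_sep hωA
  refine hT_sep _ (h_stay ⟨hωA, hωA⟩) _ hωA fun B hB => ⟨fun h => ?_, fun h => ?_⟩
  · by_contra h'
    exact (h_sep B hB).2 ⟨hωA, h'⟩ h
  · exact (h_sep B hB).1 ⟨hωA, h⟩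

theorem ae_exists_eventually_eq (hX : IsMarkovChain_s8 P ℱ X κ) {A : Set E}
    (hA : MeasurableSet A) [HasCountableSeparatingOn E MeasurableSet A]
    (h_fix : ∀ x ∈ A, κ x = Measure.dirac x)
    {q : ℝ≥0∞} (hq : q < 1) (h_escape : ∀ x, ∀ᵐ y ∂κ x, κ y Aᶜ ≤ q) :
    ∀ᵐ ω ∂P, ∃ x ∈ A, ∀ᶠ n in atTop, X n ω = x := by
  have h_absorb : ∀ x ∈ A, κ x Aᶜ = 0 := fun x hx => by
    rw [h_fix x hx, Measure.dirac_apply' _ hA.compl]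
    simp [hx]
  filter_upwards [hX.ae_eventually_mem hA hq h_absorb h_escape,
    ae_all_iff.2 (hX.ae_imp_eq_succ hA h_fix)] with ω h_ev h_stay
  obtain ⟨N, hN⟩ := eventually_atTop.1 h_ev
  refine ⟨X N ω, hN N le_rfl, eventually_atTop.2 ⟨N, fun m hm => ?_⟩⟩
  induction m, hm using Nat.le_induction with
  | base => rfl
  | succ m hm ih => rw [h_stay m (hN m hm), ih]

end IsMarkovChain_s8

end MarkovChain

theorem MeasureTheory.ProbabilityMeasure.measurable_toMeasure {X : Type*}
    [TopologicalSpace X] [MeasurableSpace X] [BorelSpace X] [HasOuterApproxClosed X]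
    [MeasurableSpace (ProbabilityMeasure X)] [OpensMeasurableSpace (ProbabilityMeasure X)] :
    Measurable fun ν : ProbabilityMeasure X => (ν : Measure X) := by
  refine .measure_of_isPiSystem_of_isProbabilityMeasure BorelSpace.measurable_eq
    isPiSystem_isOpen fun U hU => LowerSemicontinuous.measurable ?_
  exact lowerSemicontinuous_iff_le_liminf.2 fun ν =>
    ProbabilityMeasure.le_liminf_measure_open_of_tendsto tendsto_id hU

theorem Measurable.measure_pi {α ι : Type*} [Fintype ι] {β : ι → Type*} [MeasurableSpace α]
    [∀ i, MeasurableSpace (β i)] {μ : α → ∀ i, Measure (β i)}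
    [∀ a i, IsProbabilityMeasure (μ a i)] (hμ : ∀ i, Measurable fun a => μ a i) :
    Measurable fun a => Measure.pi (μ a) := by
  refine .measure_of_isPiSystem_of_isProbabilityMeasure generateFrom_pi.symm isPiSystem_pi ?_
  rintro _ ⟨s, hs, rfl⟩
  simp_rw [Measure.pi_pi]
  exact Finset.measurable_prod _ fun i _ =>
    (Measure.measurable_coe (hs i (mem_univ i))).comp (hμ i)

section Bootstrap

variable {S : Type*} [MeasurableSpace S]

theorem empiricalMeasure_const {N : ℕ} (hN : 0 < N) (x : S) :
    empiricalMeasure hN (fun _ => x) = diracProba x := by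
  apply Subtype.ext
  change (N : ℝ≥0∞)⁻¹ • ∑ _i : Fin N, Measure.dirac x = Measure.dirac x
  rw [Finset.sum_const, Finset.card_univ, Fintype.card_fin, ← Nat.cast_smul_eq_nsmul ℝ≥0∞,
    smul_smul, ENNReal.inv_mul_cancel (by exact_mod_cast hN.ne') (ENNReal.natCast_ne_top N),
    one_smul]

theorem inv_natCast_le_empiricalMeasure_singleton {N : ℕ} (hN : 0 < N) (x : Fin N → S)
    (i : Fin N) : (N : ℝ≥0∞)⁻¹ ≤ (empiricalMeasure hN x : Measure S) {x i} := by
  change (N : ℝ≥0∞)⁻¹ ≤ ((N : ℝ≥0∞)⁻¹ • ∑ j, Measure.dirac (x j)) {x i}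
  rw [Measure.smul_apply, Measure.finsetSum_apply, smul_eq_mul]
  calc (N : ℝ≥0∞)⁻¹ = (N : ℝ≥0∞)⁻¹ * Measure.dirac (x i) {x i} := by
        rw [Measure.dirac_apply_of_mem (mem_singleton _), mul_one]
    _ ≤ (N : ℝ≥0∞)⁻¹ * ∑ j, Measure.dirac (x j) {x i} := by
        gcongr
        exact Finset.single_le_sum (f := fun j => Measure.dirac (x j) {x i})
          (fun _ _ => zero_le) (Finset.mem_univ i)

variable [TopologicalSpace S] [PolishSpace S] [BorelSpace S]
  [MeasurableSpace (ProbabilityMeasure S)] [BorelSpace (ProbabilityMeasure S)]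

theorem measurableSet_range_diracProba : MeasurableSet (range (diracProba (X := S))) :=
  (continuous_diracProba.measurableEmbedding injective_diracProba).measurableSet_range

instance : HasCountableSeparatingOn (ProbabilityMeasure S) MeasurableSet (range diracProba) := by
  have : SecondCountableTopology (range (diracProba (X := S))) :=
    diracProbaHomeomorph.symm.secondCountableTopology
  exact .mono (p₁ := IsOpen) (fun _ hU => hU.measurableSet) subset_rfl

variable {N : ℕ} (hN : 0 < N)

noncomputable def bootstrapMarkovKernel :
    Kernel (ProbabilityMeasure S) (ProbabilityMeasure S) where
  toFun ν := bootstrapKernel hN ν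
  measurable' := (Measure.measurable_map _ (continuous_empiricalMeasure hN).measurable).comp
    (Measurable.measure_pi fun _ => ProbabilityMeasure.measurable_toMeasure)

instance : IsMarkovKernel (bootstrapMarkovKernel (S := S) hN) :=
  ⟨fun ν => (bootstrapKernel hN ν).prop⟩

theorem bootstrapMarkovKernel_apply (ν : ProbabilityMeasure S) :
    bootstrapMarkovKernel hN ν =
      (Measure.pi fun _ : Fin N => (ν : Measure S)).map (empiricalMeasure hN) :=
  rfl

theorem bootstrapMarkovKernel_diracProba (x : S) :
    bootstrapMarkovKernel hN (diracProba x) = Measure.dirac (diracProba x) := by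
  rw [bootstrapMarkovKernel_apply]
  change (Measure.pi fun _ : Fin N => Measure.dirac x).map _ = _
  rw [← Measure.infinitePi_eq_pi, Measure.infinitePi_dirac (fun _ => x),
    Measure.map_dirac' (continuous_empiricalMeasure hN).measurable, empiricalMeasure_const]

theorem measure_singleton_pow_le_bootstrapMarkovKernel_range_diracProba
    (ν : ProbabilityMeasure S) (y : S) :
    (ν : Measure S) {y} ^ N ≤ bootstrapMarkovKernel hN ν (range diracProba) := by
  rw [bootstrapMarkovKernel_apply, Measure.map_apply (continuous_empiricalMeasure hN).measurable
    measurableSet_range_diracProba]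
  have h_const : univ.pi (fun _ : Fin N => {y}) ⊆ empiricalMeasure hN ⁻¹' range diracProba :=
    fun z hz => ⟨y, by
      rw [← empiricalMeasure_const hN y, ← funext fun i => hz i (mem_univ i)]⟩
  calc (ν : Measure S) {y} ^ N
      = Measure.pi (fun _ : Fin N => (ν : Measure S)) (univ.pi fun _ => {y}) := by
        rw [Measure.pi_pi, Finset.prod_const, Finset.card_univ, Fintype.card_fin]
    _ ≤ _ := measure_mono h_const

theorem ae_bootstrapMarkovKernel_compl_range_diracProba_le (ν : ProbabilityMeasure S) :
    ∀ᵐ ρ ∂bootstrapMarkovKernel hN ν,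
      bootstrapMarkovKernel hN ρ (range diracProba)ᶜ ≤ 1 - (N : ℝ≥0∞)⁻¹ ^ N := by
  rw [bootstrapMarkovKernel_apply, ae_map_iff (continuous_empiricalMeasure hN).aemeasurable
    (measurableSet_le ((bootstrapMarkovKernel hN).measurable_coe
      measurableSet_range_diracProba.compl) measurable_const)]
  refine ae_of_all _ fun x => ?_
  rw [prob_compl_eq_one_sub measurableSet_range_diracProba]
  gcongr
  calc (N : ℝ≥0∞)⁻¹ ^ N ≤ (empiricalMeasure hN x : Measure S) {x ⟨0, hN⟩} ^ N := by
        gcongr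
        exact inv_natCast_le_empiricalMeasure_singleton hN x _
    _ ≤ _ := measure_singleton_pow_le_bootstrapMarkovKernel_range_diracProba hN _ _

end Bootstrap

/-- Model collapse for purely generative recursive training: a Markov chain `(μ n)` on `P(S)`
with the bootstrap kernel `κ_N` converges almost surely, in the topology of weak convergence,
to a (random) Dirac measure `δ_γ` for some `S`-valued random variable `γ`. -/
theorem model_collapse
    {S : Type*} [MeasurableSpace S] [TopologicalSpace S] [PolishSpace S] [BorelSpace S]
    [MeasurableSpace (ProbabilityMeasure S)] [BorelSpace (ProbabilityMeasure S)]
    {N : ℕ} (hN : 0 < N)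
    {Ω : Type*} {m0 : MeasurableSpace Ω} (P : Measure Ω) [IsProbabilityMeasure P]
    (ℱ : Filtration ℕ m0)
    (μ : ℕ → Ω → ProbabilityMeasure S)
    (hadp : ∀ n, Measurable[ℱ n] (μ n))
    (hMarkov : ∀ (n : ℕ) (g : ProbabilityMeasure S → ℝ), Measurable g →
      (∃ C : ℝ, ∀ ν, |g ν| ≤ C) →
      P[(fun ω => g (μ (n + 1) ω)) | ℱ n]
        =ᵐ[P] fun ω => ∫ ν, g ν ∂(bootstrapKernel hN (μ n ω) :
          Measure (ProbabilityMeasure S))) :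
    ∃ γ : Ω → S, ∀ᵐ ω ∂P,
      Tendsto (fun n => μ n ω) atTop
        (𝓝 (⟨Measure.dirac (γ ω), inferInstance⟩ : ProbabilityMeasure S)) := by
  have hX : IsMarkovChain_s8 P ℱ μ (bootstrapMarkovKernel hN) := ⟨hadp, hMarkov⟩
  have hq : 1 - (N : ℝ≥0∞)⁻¹ ^ N < 1 := ENNReal.sub_lt_self ENNReal.one_ne_top one_ne_zero
    (pow_ne_zero _ (ENNReal.inv_ne_zero.2 (ENNReal.natCast_ne_top N)))
  have h_collapse : ∀ᵐ ω ∂P, ∃ y, ∀ᶠ n in atTop, μ n ω = diracProba y := by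
    filter_upwards [hX.ae_exists_eventually_eq measurableSet_range_diracProba
      (by rintro _ ⟨x, rfl⟩; exact bootstrapMarkovKernel_diracProba hN x) hq
      (ae_bootstrapMarkovKernel_compl_range_diracProba_le hN)] with ω ⟨_, ⟨y, rfl⟩, hy⟩
    exact ⟨y, hy⟩
  have : Nonempty S := let ⟨_, y, _⟩ := h_collapse.exists; ⟨y⟩
  refine ⟨fun ω => Classical.epsilon fun y => ∀ᶠ n in atTop, μ n ω = diracProba y, ?_⟩
  filter_upwards [h_collapse] with ω hω
  exact tendsto_const_nhds.congr' (Classical.epsilon_spec hω |>.mono fun n hn => hn.symm)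
end

section
/- Let S be a Polish space and N ≥ 1. The bootstrap (empirical-measure) kernel κ_N : P(S) → P(P(S)), defined by letting κ_N(μ) be the pushforward of the product measure μ^{⊗N} on S^N under the map (x_1,…,x_N) ↦ (1/N)∑_{i=1}^N δ_{x_i}, is continuous when P(S) and P(P(S)) carry their topologies of weak convergence. (In particular, the Markov chain generated by κ_N is Feller.) -/
open MeasureTheory Topology Filter BoundedContinuousFunction
open scoped ENNReal NNReal

theorem MeasureTheory.ProbabilityMeasure.continuous_pi_const {ι S : Type*} [Fintype ι] [MeasurableSpace S]
    [TopologicalSpace S] [SecondCountableTopology S] [TopologicalSpace.PseudoMetrizableSpace S]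
    [OpensMeasurableSpace S] :
    Continuous fun μ : ProbabilityMeasure S => ProbabilityMeasure.pi fun _ : ι => μ :=
  ProbabilityMeasure.continuous_pi.comp (_root_.continuous_pi fun _ => continuous_id)

theorem bootstrapKernel_eq_map_pi {S : Type*} [MeasurableSpace S] [TopologicalSpace S]
    [PolishSpace S] [BorelSpace S]
    [MeasurableSpace (ProbabilityMeasure S)] [BorelSpace (ProbabilityMeasure S)]
    {N : ℕ} (hN : 0 < N) (μ : ProbabilityMeasure S) :
    bootstrapKernel hN μ = (ProbabilityMeasure.pi fun _ : Fin N => μ).map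
      (continuous_empiricalMeasure hN).measurable.aemeasurable :=
  rfl

/-- The bootstrap (empirical-measure) kernel `κ_N : P(S) → P(P(S))` is continuous when `P(S)`
and `P(P(S))` carry their topologies of weak convergence; in particular the Markov chain
generated by `κ_N` is Feller. -/
theorem bootstrapKernel_continuous
    {S : Type*} [MeasurableSpace S] [TopologicalSpace S] [PolishSpace S] [BorelSpace S]
    [MeasurableSpace (ProbabilityMeasure S)] [BorelSpace (ProbabilityMeasure S)]
    {N : ℕ} (hN : 0 < N) :
    Continuous (bootstrapKernel (S := S) hN) := by
  simp only [funext (bootstrapKernel_eq_map_pi hN)]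
  exact (ProbabilityMeasure.continuous_map (continuous_empiricalMeasure hN)).comp
    ProbabilityMeasure.continuous_pi_const
end
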